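/- Let B ∈ ℝ^{m×n} be a NAE3SAT clause matrix, let n' ≤ n, and let A' ∈ ℝ^{(m+3n+2n')×(3n+n')} be the block matrix whose first m+3n rows are [A | 0], where A has blocks [⅓B ⅓B ⅓B], [I_n I_n −I_n], [I_n −I_n I_n], [−I_n I_n I_n] from top to bottom; whose next n' rows are [⅔I_{n'} 0 | ⅔I_{n'} 0 | ⅔I_{n'} 0 | −2I_{n'}]; and whose last n' rows are [0_{n'×3n} | (8/3)I_{n'}]. Suppose that for every ψ_A ∈ {0,1}^{n'} there exists ψ ∈ {0,1}ⁿ with ψᵢ = (ψ_A)ᵢ for all i ∈ [n'] such that ψ NAE-satisfies B. Then lindisc(A') ≤ 4/3; that is, for every w ∈ [0,1]^{3n+n'} there exists x ∈ {0,1}^{3n+n'} with ‖A'(w − x)‖_∞ ≤ 4/3. -/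

import Mathlib

/-- The block matrix `A` with row blocks `[⅓B ⅓B ⅓B]`, `[I I -I]`, `[I -I I]`, `[-I I I]`. -/
noncomputable def Amat {m n : ℕ} (B : Matrix (Fin m) (Fin n) ℝ) :
    Matrix (Fin m ⊕ (Fin n ⊕ Fin n ⊕ Fin n)) (Fin n ⊕ Fin n ⊕ Fin n) ℝ :=
  Matrix.of fun r c =>
    match r with
    | Sum.inl j => (1 / 3) * B j (Sum.elim id (Sum.elim id id) c)
    | Sum.inr (Sum.inl k) =>
        Sum.elim (fun i => if k = i then (1 : ℝ) else 0)
          (Sum.elim (fun i => if k = i then (1 : ℝ) else 0)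
            (fun i => if k = i then (-1 : ℝ) else 0)) c
    | Sum.inr (Sum.inr (Sum.inl k)) =>
        Sum.elim (fun i => if k = i then (1 : ℝ) else 0)
          (Sum.elim (fun i => if k = i then (-1 : ℝ) else 0)
            (fun i => if k = i then (1 : ℝ) else 0)) c
    | Sum.inr (Sum.inr (Sum.inr k)) =>
        Sum.elim (fun i => if k = i then (-1 : ℝ) else 0)
          (Sum.elim (fun i => if k = i then (1 : ℝ) else 0)
            (fun i => if k = i then (1 : ℝ) else 0)) c

/-- `B` is a NAE3SAT clause matrix: each row is `b₁e^{i₁} + b₂e^{i₂} + b₃e^{i₃}`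
with signs `b₁,b₂,b₃ ∈ {-1,1}`. -/
def IsNAEClauseMatrix {m n : ℕ} (B : Matrix (Fin m) (Fin n) ℝ) : Prop :=
  ∃ (i1 i2 i3 : Fin m → Fin n) (b1 b2 b3 : Fin m → ℝ),
    (∀ j, (b1 j = -1 ∨ b1 j = 1) ∧ (b2 j = -1 ∨ b2 j = 1) ∧ (b3 j = -1 ∨ b3 j = 1)) ∧
    (∀ j i, B j i = (if i1 j = i then b1 j else 0) + (if i2 j = i then b2 j else 0) +
      (if i3 j = i then b3 j else 0))

/-- `ψ ∈ {0,1}ⁿ` NAE-satisfies `B` if `‖B((1/2)·1 - ψ)‖_∞ ≤ 1/2`. -/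
def NAESatisfies {m n : ℕ} (B : Matrix (Fin m) (Fin n) ℝ) (ψ : Fin n → ℝ) : Prop :=
  (∀ i, ψ i = 0 ∨ ψ i = 1) ∧ ‖B.mulVec ((fun _ => (1 : ℝ) / 2) - ψ)‖ ≤ 1 / 2

/-- The extended block matrix `A'` used in the `Π₂`-hardness reduction. -/
noncomputable def A'mat {m n n' : ℕ} (h : n' ≤ n) (B : Matrix (Fin m) (Fin n) ℝ) :
    Matrix ((Fin m ⊕ (Fin n ⊕ Fin n ⊕ Fin n)) ⊕ (Fin n' ⊕ Fin n'))
      ((Fin n ⊕ Fin n ⊕ Fin n) ⊕ Fin n') ℝ :=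
  Matrix.of fun r c =>
    match r, c with
    | Sum.inl r, Sum.inl c => Amat B r c
    | Sum.inl _, Sum.inr _ => 0
    | Sum.inr (Sum.inl k), Sum.inl c =>
        Sum.elim (fun i => if Fin.castLE h k = i then (2 : ℝ) / 3 else 0)
          (Sum.elim (fun i => if Fin.castLE h k = i then (2 : ℝ) / 3 else 0)
            (fun i => if Fin.castLE h k = i then (2 : ℝ) / 3 else 0)) c
    | Sum.inr (Sum.inl k), Sum.inr k' => if k = k' then -2 else 0
    | Sum.inr (Sum.inr _), Sum.inl _ => 0
    | Sum.inr (Sum.inr k), Sum.inr k' => if k = k' then 8 / 3 else 0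

/-!
Round the last `n'` coordinates of `w` to the nearest integers `ψ_A` and extend `ψ_A` to a
NAE-satisfying `ψ`. Each triple `(w_i, w_{n+i}, w_{2n+i})` can be rounded so that the three
gadget rows `[I I -I]`, `[I -I I]`, `[-I I I]` stay within `4/3` and the total rounding error `s_i`
of the triple lies within `1` of `1 - 2ψ_i`: sort the triple, and reflect `w ↦ 1 - w` when
`ψ_i = 1`. A clause row is then `⅓ (B (s - (1 - 2ψ)) + B (1 - 2ψ))`, at most `⅓ (3 + 1)` since
each row of `B` has three entries `±1` and `‖B (½ - ψ)‖_∞ ≤ ½`. In a coupling row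
`⅔ s_k - 2 (w_k - ψ_k)` the two terms have opposite signs and sizes at most `4/3` and `1`.
-/

def IsBalancedTriple (d₁ d₂ d₃ : ℝ) : Prop :=
  |d₁ + d₂ - d₃| ≤ 4 / 3 ∧ |d₁ - d₂ + d₃| ≤ 4 / 3 ∧ |-d₁ + d₂ + d₃| ≤ 4 / 3

namespace IsBalancedTriple

variable {d₁ d₂ d₃ : ℝ}

theorem comm₁₂ (h : IsBalancedTriple d₁ d₂ d₃) : IsBalancedTriple d₂ d₁ d₃ := by
  obtain ⟨h₁, h₂, h₃⟩ := h
  exact ⟨by rwa [add_comm d₂], by convert h₃ using 2; ring, by convert h₂ using 2; ring⟩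

theorem comm₂₃ (h : IsBalancedTriple d₁ d₂ d₃) : IsBalancedTriple d₁ d₃ d₂ := by
  obtain ⟨h₁, h₂, h₃⟩ := h
  exact ⟨by convert h₂ using 2; ring, by convert h₁ using 2; ring, by convert h₃ using 2; ring⟩

theorem neg (h : IsBalancedTriple d₁ d₂ d₃) : IsBalancedTriple (-d₁) (-d₂) (-d₃) := by
  obtain ⟨h₁, h₂, h₃⟩ := h
  exact ⟨by rw [← abs_neg]; convert h₁ using 2; ring, by rw [← abs_neg]; convert h₂ using 2; ring,
    by rw [← abs_neg]; convert h₃ using 2; ring⟩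

end IsBalancedTriple

theorem exists_binary_isBalancedTriple_of_le {a b c : ℝ} (ha : 0 ≤ a) (hc : c ≤ 1)
    (hab : a ≤ b) (hbc : b ≤ c) :
    ∃ x₁ x₂ x₃ : ℝ, (x₁ = 0 ∨ x₁ = 1) ∧ (x₂ = 0 ∨ x₂ = 1) ∧ (x₃ = 0 ∨ x₃ = 1) ∧
      IsBalancedTriple (a - x₁) (b - x₂) (c - x₃) ∧
      (a - x₁) + (b - x₂) + (c - x₃) ∈ Set.Icc 0 2 := by
  simp only [IsBalancedTriple, abs_le, Set.mem_Icc]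
  by_cases h₂ : a + b + c ≤ 2
  · by_cases h₄ : b + c - a ≤ 4 / 3
    · refine ⟨0, 0, 0, by norm_num, by norm_num, by norm_num, ?_⟩
      refine ⟨⟨⟨?_, ?_⟩, ⟨?_, ?_⟩, ⟨?_, ?_⟩⟩, ?_, ?_⟩ <;> linarith
    · refine ⟨0, 0, 1, by norm_num, by norm_num, by norm_num, ?_⟩
      refine ⟨⟨⟨?_, ?_⟩, ⟨?_, ?_⟩, ⟨?_, ?_⟩⟩, ?_, ?_⟩ <;> linarith
  · refine ⟨0, 1, 1, by norm_num, by norm_num, by norm_num, ?_⟩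
    refine ⟨⟨⟨?_, ?_⟩, ⟨?_, ?_⟩, ⟨?_, ?_⟩⟩, ?_, ?_⟩ <;> linarith

theorem exists_binary_isBalancedTriple {a b c : ℝ} (ha : a ∈ Set.Icc (0 : ℝ) 1)
    (hb : b ∈ Set.Icc (0 : ℝ) 1) (hc : c ∈ Set.Icc (0 : ℝ) 1) :
    ∃ x₁ x₂ x₃ : ℝ, (x₁ = 0 ∨ x₁ = 1) ∧ (x₂ = 0 ∨ x₂ = 1) ∧ (x₃ = 0 ∨ x₃ = 1) ∧
      IsBalancedTriple (a - x₁) (b - x₂) (c - x₃) ∧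
      (a - x₁) + (b - x₂) + (c - x₃) ∈ Set.Icc 0 2 := by
  wlog hab : a ≤ b generalizing a b c
  · obtain ⟨x₂, x₁, x₃, h₂, h₁, h₃, hbal, hs⟩ := this hb ha hc (by linarith)
    exact ⟨x₁, x₂, x₃, h₁, h₂, h₃, hbal.comm₁₂, by rwa [add_comm (a - x₁)]⟩
  wlog hac : a ≤ c generalizing a b c
  · obtain ⟨x₃, x₁, x₂, h₃, h₁, h₂, hbal, hs⟩ := this hc ha hb (by linarith) (by linarith)
    refine ⟨x₁, x₂, x₃, h₁, h₂, h₃, hbal.comm₁₂.comm₂₃, ?_⟩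
    rwa [add_comm, ← add_assoc]
  wlog hbc : b ≤ c generalizing a b c
  · obtain ⟨x₁, x₃, x₂, h₁, h₃, h₂, hbal, hs⟩ := this ha hc hb hac hab (by linarith)
    exact ⟨x₁, x₂, x₃, h₁, h₂, h₃, hbal.comm₂₃, by rwa [add_right_comm]⟩
  exact exists_binary_isBalancedTriple_of_le ha.1 hc.2 hab hbc

theorem exists_binary_isBalancedTriple_sum_near {a b c t : ℝ} (ha : a ∈ Set.Icc (0 : ℝ) 1)
    (hb : b ∈ Set.Icc (0 : ℝ) 1) (hc : c ∈ Set.Icc (0 : ℝ) 1) (ht : t = 0 ∨ t = 1) :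
    ∃ x₁ x₂ x₃ : ℝ, (x₁ = 0 ∨ x₁ = 1) ∧ (x₂ = 0 ∨ x₂ = 1) ∧ (x₃ = 0 ∨ x₃ = 1) ∧
      IsBalancedTriple (a - x₁) (b - x₂) (c - x₃) ∧
      |(a - x₁) + (b - x₂) + (c - x₃) - (1 - 2 * t)| ≤ 1 := by
  rcases ht with rfl | rfl
  · obtain ⟨x₁, x₂, x₃, h₁, h₂, h₃, hbal, hs, hs'⟩ := exists_binary_isBalancedTriple ha hb hc
    exact ⟨x₁, x₂, x₃, h₁, h₂, h₃, hbal, abs_le.2 ⟨by linarith, by linarith⟩⟩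
  · have reflect {y : ℝ} (hy : y ∈ Set.Icc (0 : ℝ) 1) : 1 - y ∈ Set.Icc (0 : ℝ) 1 :=
      ⟨by linarith [hy.2], by linarith [hy.1]⟩
    have flip {x : ℝ} (hx : x = 0 ∨ x = 1) : 1 - x = 0 ∨ 1 - x = 1 := by
      rcases hx with rfl | rfl <;> norm_num
    obtain ⟨x₁, x₂, x₃, h₁, h₂, h₃, hbal, hs, hs'⟩ :=
      exists_binary_isBalancedTriple (reflect ha) (reflect hb) (reflect hc)
    refine ⟨1 - x₁, 1 - x₂, 1 - x₃, flip h₁, flip h₂, flip h₃, ?_,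
      abs_le.2 ⟨by linarith, by linarith⟩⟩
    convert hbal.neg using 1 <;> ring

theorem round_eq_zero_or_one {y : ℝ} (hy : y ∈ Set.Icc (0 : ℝ) 1) :
    (round y : ℝ) = 0 ∨ (round y : ℝ) = 1 := by
  have h₀ : 0 ≤ round y := by
    rw [round_eq]; exact Int.floor_nonneg.2 (by linarith [hy.1])
  have h₁ : round y ≤ 1 := by
    rw [round_eq]; exact Int.floor_le_iff.2 (by push_cast; linarith [hy.2])
  rcases (show round y = 0 ∨ round y = 1 by omega) with h | h <;> simp [h]

section MulVec

open Matrix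

variable {m n n' : ℕ}

def tripleSum (u : Fin n ⊕ Fin n ⊕ Fin n → ℝ) (i : Fin n) : ℝ :=
  u (Sum.inl i) + u (Sum.inr (Sum.inl i)) + u (Sum.inr (Sum.inr i))

variable (B : Matrix (Fin m) (Fin n) ℝ) (u : Fin n ⊕ Fin n ⊕ Fin n → ℝ)

theorem Amat_mulVec_inl (j : Fin m) :
    (Amat B *ᵥ u) (Sum.inl j) = 1 / 3 * (B *ᵥ tripleSum u) j := by
  simp only [mulVec, dotProduct, Fintype.sum_sum_type, Amat, of_apply, Sum.elim_inl,
    Sum.elim_inr, id_eq, tripleSum, Finset.mul_sum, ← Finset.sum_add_distrib]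
  exact Finset.sum_congr rfl fun i _ => by ring

theorem Amat_mulVec_inr_inl (k : Fin n) :
    (Amat B *ᵥ u) (Sum.inr (Sum.inl k)) =
      u (Sum.inl k) + u (Sum.inr (Sum.inl k)) - u (Sum.inr (Sum.inr k)) := by
  simp only [mulVec, dotProduct, Amat, of_apply, Fintype.sum_sum_type, Sum.elim_inl, Sum.elim_inr,
    ite_mul, one_mul, neg_mul, zero_mul, Finset.sum_ite_eq, Finset.mem_univ, ↓reduceIte]
  ring

theorem Amat_mulVec_inr_inr_inl (k : Fin n) :
    (Amat B *ᵥ u) (Sum.inr (Sum.inr (Sum.inl k))) =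
      u (Sum.inl k) - u (Sum.inr (Sum.inl k)) + u (Sum.inr (Sum.inr k)) := by
  simp only [mulVec, dotProduct, Amat, of_apply, Fintype.sum_sum_type, Sum.elim_inl, Sum.elim_inr,
    ite_mul, one_mul, neg_mul, zero_mul, Finset.sum_ite_eq, Finset.mem_univ, ↓reduceIte]
  ring

theorem Amat_mulVec_inr_inr_inr (k : Fin n) :
    (Amat B *ᵥ u) (Sum.inr (Sum.inr (Sum.inr k))) =
      -u (Sum.inl k) + u (Sum.inr (Sum.inl k)) + u (Sum.inr (Sum.inr k)) := by
  simp [mulVec, dotProduct, Fintype.sum_sum_type, Amat, ite_mul, add_assoc]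

variable (h : n' ≤ n) (v : (Fin n ⊕ Fin n ⊕ Fin n) ⊕ Fin n' → ℝ)

theorem A'mat_mulVec_inl (r : Fin m ⊕ (Fin n ⊕ Fin n ⊕ Fin n)) :
    (A'mat h B *ᵥ v) (Sum.inl r) = (Amat B *ᵥ (v ∘ Sum.inl)) r := by
  simp [mulVec, dotProduct, Fintype.sum_sum_type, A'mat]

theorem A'mat_mulVec_inr_inl (k : Fin n') :
    (A'mat h B *ᵥ v) (Sum.inr (Sum.inl k)) =
      2 / 3 * tripleSum (v ∘ Sum.inl) (Fin.castLE h k) - 2 * v (Sum.inr k) := by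
  simp only [mulVec, dotProduct, A'mat, of_apply, Fintype.sum_sum_type, Sum.elim_inl, ite_mul,
    zero_mul, Finset.sum_ite_eq, Finset.mem_univ, ↓reduceIte, Sum.elim_inr, neg_mul, tripleSum,
    Function.comp_apply]
  ring

theorem A'mat_mulVec_inr_inr (k : Fin n') :
    (A'mat h B *ᵥ v) (Sum.inr (Sum.inr k)) = 8 / 3 * v (Sum.inr k) := by
  simp [mulVec, dotProduct, Fintype.sum_sum_type, A'mat, ite_mul]

end MulVec

section ClauseRows

open Matrix

variable {m n : ℕ} {B : Matrix (Fin m) (Fin n) ℝ}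

theorem Matrix.abs_mulVec_apply_le_of_abs_sub_le {ι κ : Type*} [Fintype κ] {M : Matrix ι κ ℝ}
    {s u : κ → ℝ} {ε : ℝ} (hsu : ∀ i, |s i - u i| ≤ ε) (j : ι) :
    |(M *ᵥ s) j| ≤ |(M *ᵥ u) j| + ε * ∑ i, |M j i| := by
  have hdiff : (M *ᵥ s) j = (M *ᵥ u) j + ∑ i, M j i * (s i - u i) := by
    simp only [mulVec, dotProduct, mul_sub, Finset.sum_sub_distrib, add_sub_cancel]
  calc |(M *ᵥ s) j| ≤ |(M *ᵥ u) j| + ∑ i, |M j i * (s i - u i)| := by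
        rw [hdiff]
        exact (abs_add_le _ _).trans (add_le_add_right (Finset.abs_sum_le_sum_abs _ _) _)
    _ ≤ |(M *ᵥ u) j| + ε * ∑ i, |M j i| := by
        rw [Finset.mul_sum]
        gcongr with i
        rw [abs_mul, mul_comm]
        exact mul_le_mul_of_nonneg_right (hsu i) (abs_nonneg _)

theorem IsNAEClauseMatrix.sum_abs_le (hB : IsNAEClauseMatrix B) (j : Fin m) :
    ∑ i, |B j i| ≤ 3 := by
  obtain ⟨i₁, i₂, i₃, b₁, b₂, b₃, hb, hB⟩ := hB
  calc ∑ i, |B j i|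
      ≤ ∑ i, (|if i₁ j = i then b₁ j else 0| + |if i₂ j = i then b₂ j else 0| +
          |if i₃ j = i then b₃ j else 0|) :=
        Finset.sum_le_sum fun i _ => hB j i ▸ abs_add_three _ _ _
    _ = |b₁ j| + |b₂ j| + |b₃ j| := by
        simp only [Finset.sum_add_distrib, apply_ite abs, abs_zero, Finset.sum_ite_eq,
          Finset.mem_univ, if_true]
    _ = 3 := by
        obtain ⟨h₁ | h₁, h₂ | h₂, h₃ | h₃⟩ := hb j <;> norm_num [h₁, h₂, h₃]

theorem NAESatisfies.abs_mulVec_le {ψ : Fin n → ℝ} (hψ : NAESatisfies B ψ) (j : Fin m) :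
    |(B *ᵥ fun i => 1 - 2 * ψ i) j| ≤ 1 := by
  have hφ : (fun i => 1 - 2 * ψ i) = (2 : ℝ) • ((fun _ => (1 : ℝ) / 2) - ψ) := by
    ext i; simp only [Pi.smul_apply, Pi.sub_apply, smul_eq_mul]; ring
  rw [hφ, mulVec_smul, Pi.smul_apply, smul_eq_mul, abs_mul, abs_two]
  have := (norm_le_pi_norm _ j).trans hψ.2
  rw [Real.norm_eq_abs] at this
  linarith

theorem IsNAEClauseMatrix.abs_third_mulVec_le (hB : IsNAEClauseMatrix B) {ψ : Fin n → ℝ}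
    (hψ : NAESatisfies B ψ) {s : Fin n → ℝ} (hs : ∀ i, |s i - (1 - 2 * ψ i)| ≤ 1) (j : Fin m) :
    |1 / 3 * (B *ᵥ s) j| ≤ 4 / 3 := by
  have := (abs_mulVec_apply_le_of_abs_sub_le hs j).trans
    (add_le_add (hψ.abs_mulVec_le j) (mul_le_mul_of_nonneg_left (hB.sum_abs_le j) zero_le_one))
  rw [abs_mul, abs_of_pos (by norm_num : (0 : ℝ) < 1 / 3)]
  linarith

end ClauseRows

theorem abs_coupling_le {s y t : ℝ} (ht : t = 0 ∨ t = 1) (hy : y ∈ Set.Icc (0 : ℝ) 1)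
    (hyt : |y - t| ≤ 1 / 2) (hs : |s - (1 - 2 * t)| ≤ 1) :
    |2 / 3 * s - 2 * (y - t)| ≤ 4 / 3 := by
  rw [abs_le] at hyt hs ⊢
  obtain ⟨hy₀, hy₁⟩ := hy
  rcases ht with rfl | rfl <;> constructor <;> linarith [hyt.1, hyt.2, hs.1, hs.2]

/-- Completeness of the `Π₂`-hardness reduction: if every assignment `ψ_A` to the first `n'`
variables extends to a NAE-satisfying assignment of `B`, then for every `w ∈ [0,1]^{3n+n'}`
there is `x ∈ {0,1}^{3n+n'}` with `‖A'(w-x)‖_∞ ≤ 4/3`. -/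
theorem pi2_reduction_completeness {m n n' : ℕ} (h : n' ≤ n)
    (B : Matrix (Fin m) (Fin n) ℝ) (hB : IsNAEClauseMatrix B)
    (hsat : ∀ ψA : Fin n' → ℝ, (∀ i, ψA i = 0 ∨ ψA i = 1) →
      ∃ ψ : Fin n → ℝ, (∀ i : Fin n', ψ (Fin.castLE h i) = ψA i) ∧ NAESatisfies B ψ) :
    ∀ w : ((Fin n ⊕ Fin n ⊕ Fin n) ⊕ Fin n') → ℝ, (∀ i, w i ∈ Set.Icc (0 : ℝ) 1) →
      ∃ x : ((Fin n ⊕ Fin n ⊕ Fin n) ⊕ Fin n') → ℝ, (∀ i, x i = 0 ∨ x i = 1) ∧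
        ‖(A'mat h B).mulVec (w - x)‖ ≤ 4 / 3 := by
  intro w hw
  set ψA : Fin n' → ℝ := fun k => round (w (Sum.inr k))
  have hψA k : ψA k = 0 ∨ ψA k = 1 := round_eq_zero_or_one (hw _)
  obtain ⟨ψ, hψext, hψ⟩ := hsat ψA hψA
  choose x₁ x₂ x₃ hx₁ hx₂ hx₃ hbal hsum using fun i =>
    exists_binary_isBalancedTriple_sum_near (hw (Sum.inl (Sum.inl i)))
      (hw (Sum.inl (Sum.inr (Sum.inl i)))) (hw (Sum.inl (Sum.inr (Sum.inr i)))) (hψ.1 i)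
  refine ⟨Sum.elim (Sum.elim x₁ (Sum.elim x₂ x₃)) ψA, ?_, ?_⟩
  · rintro ((i | i | i) | k)
    exacts [hx₁ i, hx₂ i, hx₃ i, hψA k]
  rw [pi_norm_le_iff_of_nonneg (by norm_num)]
  rintro ((j | k | k | k) | k | k) <;>
    simp only [Real.norm_eq_abs, A'mat_mulVec_inl, Amat_mulVec_inl, Amat_mulVec_inr_inl,
      Amat_mulVec_inr_inr_inl, Amat_mulVec_inr_inr_inr, A'mat_mulVec_inr_inl, A'mat_mulVec_inr_inr,
      tripleSum, Function.comp_apply, Pi.sub_apply, Sum.elim_inl, Sum.elim_inr]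
  · exact hB.abs_third_mulVec_le hψ hsum j
  · exact (hbal k).1
  · exact (hbal k).2.1
  · exact (hbal k).2.2
  · exact abs_coupling_le (hψA k) (hw _) (abs_sub_round _) (hψext k ▸ hsum _)
  · rw [abs_mul, abs_of_pos (by norm_num : (0 : ℝ) < 8 / 3)]
    linarith [abs_sub_round (w (Sum.inr k))]
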